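/- arXiv:1701.01590 — 2 statements merged into one kernel-verified Lean document; each statement's English description precedes it below -/
import Mathlib

section
/- Suppose h1 ≠ 0, h2 ≠ 0 and h3 ≠ 0. Then the Gaussian observation channel is non-manipulable: every Markov kernel κ from ℝ to ℝ satisfying (μ_x.bind κ).bind G = μ_x.bind G for every x ∈ ℝ must satisfy κ(u) = δ_u (the Dirac measure at u) for Lebesgue-almost every u ∈ ℝ. -/
open MeasureTheory ProbabilityTheory

/-- Bayes posterior weight of source symbol `+1` given direct observation `x`. -/
noncomputable def mixWeight (h3 x : ℝ) : ℝ :=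
  Real.exp (-(x - h3) ^ 2 / 2) /
    (Real.exp (-(x - h3) ^ 2 / 2) + Real.exp (-(x + h3) ^ 2 / 2))

/-- Conditional law of the relay's observation given direct observation `x`:
`μ_x = w(x) • N(h1,1) + (1 - w(x)) • N(-h1,1)`. -/
noncomputable def muX (h1 h3 x : ℝ) : Measure ℝ :=
  ENNReal.ofReal (mixWeight h3 x) • gaussianReal h1 1
    + ENNReal.ofReal (1 - mixWeight h3 x) • gaussianReal (-h1) 1

/-- Relay-to-destination Gaussian channel `G(v) = N(h2 ⬝ v, 1)`. -/
noncomputable def Gchan (h2 : ℝ) : ℝ → Measure ℝ := fun v => gaussianReal (h2 * v) 1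

/-!
Comparing the hypothesis at `x = 0` (posterior weight `1/2`) with the one at `x = h3` (weight
`≠ 1/2`) separates the mixture: the attack leaves the output law unchanged for both inputs
`N(±h1, 1)`. The Gaussian channel multiplies exponential moments by `exp (t² / 2)` and rescales `t`
by `h2 ≠ 0`, so `κ` preserves every exponential moment `∫ exp (t v)` of both inputs. Now
`N(h1, 1)` has density `f u = exp (2 h1 u)` with respect to `ν = N(-h1, 1)`, so
`∫ f · κf dν = ∫ f² dν = ∫ κ(f²) dν`, i.e. `∫∫ (f u - f v)² dκ(u)(v) dν(u) = 0`. As `f` is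
injective, `κ u = δ_u` for `ν`-almost every `u`, and `ν` is equivalent to Lebesgue measure.
-/

open Real Set Function
open scoped ENNReal NNReal

namespace MeasureTheory.Measure

variable {α β : Type*} [MeasurableSpace α] [MeasurableSpace β]

lemma bind_add (μ ν : Measure α) {f : α → Measure β} (hf : Measurable f) :
    (μ + ν).bind f = μ.bind f + ν.bind f := by
  ext s hs
  simp only [add_apply, bind_apply hs hf.aemeasurable, lintegral_add_measure]

lemma eq_dirac_of_ae_eq [MeasurableSingletonClass α] {μ : Measure α} [IsProbabilityMeasure μ]
    {a : α} (h : ∀ᵐ x ∂μ, x = a) : μ = dirac a := by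
  have hμ : μ = μ {a} • dirac a := by
    simpa using (ae_mem_finset_iff (s := {a})).mp (by simpa using h)
  have ha : μ {a} = 1 := by simpa using (congrArg (· univ) hμ).symm
  rwa [ha, one_smul] at hμ

lemma eq_and_eq_of_mixture_eq {μ μ' ν ν' : Measure α} [IsFiniteMeasure μ] [IsFiniteMeasure μ']
    [IsFiniteMeasure ν] [IsFiniteMeasure ν'] {w₀ w₁ : ℝ} (hw₀ : w₀ ∈ Icc 0 1)
    (hw₁ : w₁ ∈ Icc 0 1) (hne : w₀ ≠ w₁)
    (h₀ : ENNReal.ofReal w₀ • μ + ENNReal.ofReal (1 - w₀) • ν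
      = ENNReal.ofReal w₀ • μ' + ENNReal.ofReal (1 - w₀) • ν')
    (h₁ : ENNReal.ofReal w₁ • μ + ENNReal.ofReal (1 - w₁) • ν
      = ENNReal.ofReal w₁ • μ' + ENNReal.ofReal (1 - w₁) • ν') :
    μ = μ' ∧ ν = ν' := by
  have real_eq : ∀ {w : ℝ}, w ∈ Icc 0 1 →
      ENNReal.ofReal w • μ + ENNReal.ofReal (1 - w) • ν
        = ENNReal.ofReal w • μ' + ENNReal.ofReal (1 - w) • ν' →
      ∀ s, w * μ.real s + (1 - w) * ν.real s = w * μ'.real s + (1 - w) * ν'.real s := by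
    rintro w ⟨hw0, hw1⟩ h s
    have := congrArg (fun m : Measure α => (m s).toReal) h
    simp only [add_apply, smul_apply, smul_eq_mul] at this
    rwa [ENNReal.toReal_add (by finiteness) (by finiteness),
      ENNReal.toReal_add (by finiteness) (by finiteness), ENNReal.toReal_mul, ENNReal.toReal_mul,
      ENNReal.toReal_mul, ENNReal.toReal_mul, ENNReal.toReal_ofReal hw0,
      ENNReal.toReal_ofReal (sub_nonneg.mpr hw1)] at this
  have hsep : ∀ s, μ.real s = μ'.real s ∧ ν.real s = ν'.real s := by
    intro s
    have e₀ := real_eq hw₀ h₀ s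
    have e₁ := real_eq hw₁ h₁ s
    have hdiff : (w₀ - w₁) * ((μ.real s - μ'.real s) - (ν.real s - ν'.real s)) = 0 := by
      linear_combination e₀ - e₁
    have hxy := (mul_eq_zero.mp hdiff).resolve_left (sub_ne_zero.mpr hne)
    have hx : μ.real s - μ'.real s = 0 := by linear_combination e₀ + (1 - w₀) * hxy
    exact ⟨by linarith, by linarith⟩
  exact ⟨ext fun s _ ↦ (measureReal_eq_measureReal_iff).mp (hsep s).1,
    ext fun s _ ↦ (measureReal_eq_measureReal_iff).mp (hsep s).2⟩

end MeasureTheory.Measure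

namespace ProbabilityTheory

lemma lintegral_exp_mul_gaussianReal (m : ℝ) (v : ℝ≥0) (t : ℝ) :
    ∫⁻ x, ENNReal.ofReal (exp (t * x)) ∂gaussianReal m v
      = ENNReal.ofReal (exp (m * t + v * t ^ 2 / 2)) := by
  rw [← ofReal_integral_eq_lintegral_ofReal (integrable_exp_mul_gaussianReal t)
    (ae_of_all _ fun _ ↦ (exp_pos _).le)]
  simpa [mgf] using congrArg ENNReal.ofReal (congrFun (mgf_fun_id_gaussianReal (μ := m) (v := v)) t)

lemma gaussianReal_eq_withDensity_neg (m : ℝ) {v : ℝ≥0} (hv : v ≠ 0) :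
    gaussianReal m v
      = (gaussianReal (-m) v).withDensity fun x ↦ ENNReal.ofReal (exp (2 * m / v * x)) := by
  rw [gaussianReal_of_var_ne_zero _ hv, gaussianReal_of_var_ne_zero _ hv,
    ← withDensity_mul _ (measurable_gaussianPDF _ _) (by fun_prop)]
  congr 1
  funext x
  rw [Pi.mul_apply, gaussianPDF, gaussianPDF, ← ENNReal.ofReal_mul (gaussianPDFReal_nonneg _ _ _),
    gaussianPDFReal, gaussianPDFReal, mul_assoc _ (exp _), ← exp_add]
  congr 3
  have : (v : ℝ) ≠ 0 := by exact_mod_cast hv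
  field_simp
  ring

lemma Kernel.ae_eq_dirac_of_lintegral_eq {α : Type*} [MeasurableSpace α]
    [MeasurableSingletonClass α] (κ : Kernel α α) [IsMarkovKernel κ] {μ : Measure α}
    {f : α → ℝ} (hf : Measurable f) (hf_nonneg : ∀ u, 0 ≤ f u) (hf_inj : Injective f)
    (h_fin : ∫⁻ u, ENNReal.ofReal (f u ^ 2) ∂μ ≠ ∞)
    (h_f : ∫⁻ u, ∫⁻ v, ENNReal.ofReal (f v) ∂κ u ∂μ.withDensity (fun u ↦ ENNReal.ofReal (f u))
      = ∫⁻ u, ENNReal.ofReal (f u) ∂μ.withDensity (fun u ↦ ENNReal.ofReal (f u)))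
    (h_sq : ∫⁻ u, ∫⁻ v, ENNReal.ofReal (f v ^ 2) ∂κ u ∂μ = ∫⁻ u, ENNReal.ofReal (f u ^ 2) ∂μ) :
    ∀ᵐ u ∂μ, κ u = Measure.dirac u := by
  have h_mul : ∫⁻ u, ENNReal.ofReal (f u) * ∫⁻ v, ENNReal.ofReal (f v) ∂κ u ∂μ
      = ∫⁻ u, ENNReal.ofReal (f u ^ 2) ∂μ := by
    rw [lintegral_withDensity_eq_lintegral_mul _ (by fun_prop) (by fun_prop),
      lintegral_withDensity_eq_lintegral_mul _ (by fun_prop) (by fun_prop)] at h_f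
    simpa only [Pi.mul_apply, sq, ENNReal.ofReal_mul (hf_nonneg _)] using h_f
  have h_pt : ∀ u v, ENNReal.ofReal ((f u - f v) ^ 2)
      + 2 * (ENNReal.ofReal (f u) * ENNReal.ofReal (f v))
      = ENNReal.ofReal (f u ^ 2) + ENNReal.ofReal (f v ^ 2) := by
    intro u v
    rw [← ENNReal.ofReal_mul (hf_nonneg u), ← ENNReal.ofReal_ofNat 2,
      ← ENNReal.ofReal_mul zero_le_two,
      ← ENNReal.ofReal_add (sq_nonneg _)
        (mul_nonneg zero_le_two (mul_nonneg (hf_nonneg u) (hf_nonneg v))),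
      ← ENNReal.ofReal_add (sq_nonneg _) (sq_nonneg _)]
    congr 1
    ring
  set D : α → ℝ≥0∞ := fun u ↦ ∫⁻ v, ENNReal.ofReal ((f u - f v) ^ 2) ∂κ u
  have hD_meas : Measurable D :=
    Measurable.lintegral_kernel_prod_right (by fun_prop)
  have h_int : ∀ u, D u + 2 * (ENNReal.ofReal (f u) * ∫⁻ v, ENNReal.ofReal (f v) ∂κ u)
      = ENNReal.ofReal (f u ^ 2) + ∫⁻ v, ENNReal.ofReal (f v ^ 2) ∂κ u := by
    intro u
    have := lintegral_congr (μ := κ u) (h_pt u)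
    rwa [lintegral_add_left (by fun_prop), lintegral_const_mul _ (by fun_prop),
      lintegral_const_mul _ (by fun_prop), lintegral_add_left measurable_const,
      MeasureTheory.lintegral_const, measure_univ, mul_one] at this
  have hD_zero : ∫⁻ u, D u ∂μ = 0 := by
    have := lintegral_congr (μ := μ) h_int
    rw [lintegral_add_left hD_meas, lintegral_const_mul _ (by fun_prop), h_mul,
      lintegral_add_left (by fun_prop), h_sq, two_mul] at this
    exact (ENNReal.add_left_inj (ENNReal.add_ne_top.mpr ⟨h_fin, h_fin⟩)).mp
      (this.trans (zero_add _).symm)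
  filter_upwards [(lintegral_eq_zero_iff hD_meas).mp hD_zero] with u hu
  refine Measure.eq_dirac_of_ae_eq ?_
  filter_upwards [(lintegral_eq_zero_iff (by fun_prop)).mp hu] with v hv
  have : (f u - f v) ^ 2 = 0 := le_antisymm (ENNReal.ofReal_eq_zero.mp hv) (sq_nonneg _)
  exact hf_inj (by nlinarith)

end ProbabilityTheory

lemma mixWeight_mem_Icc (h3 x : ℝ) : mixWeight h3 x ∈ Icc 0 1 :=
  ⟨by unfold mixWeight; positivity,
    (div_le_one (by positivity)).mpr (le_add_of_nonneg_right (exp_pos _).le)⟩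

lemma mixWeight_zero (h3 : ℝ) : mixWeight h3 0 = 1 / 2 := by
  rw [mixWeight, zero_sub, zero_add, neg_sq]
  field_simp
  ring

lemma half_lt_mixWeight {h3 x : ℝ} (h : 0 < x * h3) : 1 / 2 < mixWeight h3 x := by
  have : exp (-(x + h3) ^ 2 / 2) < exp (-(x - h3) ^ 2 / 2) := exp_lt_exp.mpr (by nlinarith)
  rw [mixWeight, lt_div_iff₀ (by positivity)]
  linarith

lemma bind_muX (h1 h3 x : ℝ) {f : ℝ → Measure ℝ} (hf : Measurable f) :
    (muX h1 h3 x).bind f = ENNReal.ofReal (mixWeight h3 x) • (gaussianReal h1 1).bind f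
      + ENNReal.ofReal (1 - mixWeight h3 x) • (gaussianReal (-h1) 1).bind f := by
  rw [muX, Measure.bind_add _ _ hf, Measure.bind_smul, Measure.bind_smul]

lemma measurable_Gchan (h2 : ℝ) : Measurable (Gchan h2) :=
  measurable_gaussianReal.comp (by fun_prop : Measurable fun v : ℝ ↦ (h2 * v, (1 : ℝ≥0)))

lemma lintegral_exp_mul_bind_Gchan (h2 : ℝ) (μ : Measure ℝ) (t : ℝ) :
    ∫⁻ y, ENNReal.ofReal (exp (t * y)) ∂μ.bind (Gchan h2)
      = ENNReal.ofReal (exp (t ^ 2 / 2)) * ∫⁻ v, ENNReal.ofReal (exp (t * h2 * v)) ∂μ := by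
  rw [Measure.lintegral_bind (measurable_Gchan h2).aemeasurable (by fun_prop),
    ← lintegral_const_mul _ (by fun_prop)]
  refine lintegral_congr fun v ↦ ?_
  rw [Gchan, lintegral_exp_mul_gaussianReal, ← ENNReal.ofReal_mul (exp_pos _).le, ← exp_add]
  congr 2
  push_cast
  ring

lemma lintegral_exp_mul_eq_of_bind_Gchan_eq {h2 : ℝ} (hh2 : h2 ≠ 0) {μ ν : Measure ℝ}
    (h : μ.bind (Gchan h2) = ν.bind (Gchan h2)) (t : ℝ) :
    ∫⁻ v, ENNReal.ofReal (exp (t * v)) ∂μ = ∫⁻ v, ENNReal.ofReal (exp (t * v)) ∂ν := by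
  have := congrArg (fun ρ ↦ ∫⁻ y, ENNReal.ofReal (exp (t / h2 * y)) ∂ρ) h
  simp only [lintegral_exp_mul_bind_Gchan, div_mul_cancel₀ t hh2] at this
  exact (ENNReal.mul_right_inj (by positivity) ENNReal.ofReal_ne_top).mp this

lemma lintegral_lintegral_exp_mul_eq_of_bind_Gchan_eq {h2 : ℝ} (hh2 : h2 ≠ 0)
    (κ : Kernel ℝ ℝ) {μ : Measure ℝ} (h : (μ.bind κ).bind (Gchan h2) = μ.bind (Gchan h2))
    (t : ℝ) :
    ∫⁻ u, ∫⁻ v, ENNReal.ofReal (exp (t * v)) ∂κ u ∂μ = ∫⁻ u, ENNReal.ofReal (exp (t * u)) ∂μ := by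
  rw [← Measure.lintegral_bind κ.aemeasurable (by fun_prop)]
  exact lintegral_exp_mul_eq_of_bind_Gchan_eq hh2 h t

instance (h2 v : ℝ) : IsProbabilityMeasure (Gchan h2 v) := by
  unfold Gchan
  infer_instance

instance (h2 : ℝ) (μ : Measure ℝ) [IsProbabilityMeasure μ] :
    IsProbabilityMeasure (μ.bind (Gchan h2)) :=
  isProbabilityMeasure_bind (measurable_Gchan h2).aemeasurable (ae_of_all _ fun _ ↦ inferInstance)

lemma bind_bind_Gchan_eq_of_forall_muX {h3 : ℝ} (hh3 : h3 ≠ 0) (h1 h2 : ℝ) (κ : Kernel ℝ ℝ)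
    [IsMarkovKernel κ]
    (hκ : ∀ x, ((muX h1 h3 x).bind κ).bind (Gchan h2) = (muX h1 h3 x).bind (Gchan h2)) :
    ((gaussianReal h1 1).bind κ).bind (Gchan h2) = (gaussianReal h1 1).bind (Gchan h2) ∧
      ((gaussianReal (-h1) 1).bind κ).bind (Gchan h2) = (gaussianReal (-h1) 1).bind (Gchan h2) := by
  have hmix : ∀ x, _ := fun x ↦ by
    have := hκ x
    rwa [bind_muX _ _ _ κ.measurable, Measure.bind_add _ _ (measurable_Gchan h2),
      Measure.bind_smul, Measure.bind_smul, bind_muX _ _ _ (measurable_Gchan h2)] at this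
  refine Measure.eq_and_eq_of_mixture_eq (mixWeight_mem_Icc h3 0) (mixWeight_mem_Icc h3 h3) ?_
    (hmix 0) (hmix h3)
  rw [mixWeight_zero]
  exact (half_lt_mixWeight (mul_self_pos.mpr hh3)).ne

/-- **Non-manipulability of networks with nonzero coefficients.**
If `h1 ≠ 0`, `h2 ≠ 0` and `h3 ≠ 0`, then any Markov kernel `κ` whose composition with
the Gaussian observation channel leaves all conditional output laws unchanged must be
the Dirac kernel `u ↦ δ_u` for Lebesgue-almost every `u`. -/
theorem nonmanipulable_of_nonzero_coeffs
    (h1 h2 h3 : ℝ) (hh1 : h1 ≠ 0) (hh2 : h2 ≠ 0) (hh3 : h3 ≠ 0)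
    (κ : Kernel ℝ ℝ) [IsMarkovKernel κ]
    (hκ : ∀ x : ℝ,
      ((muX h1 h3 x).bind (κ ·)).bind (Gchan h2) = (muX h1 h3 x).bind (Gchan h2)) :
    ∀ᵐ u ∂(volume : Measure ℝ), κ u = Measure.dirac u := by
  obtain ⟨hP, hQ⟩ := bind_bind_Gchan_eq_of_forall_muX hh3 h1 h2 κ hκ
  have hP_density : gaussianReal h1 1
      = (gaussianReal (-h1) 1).withDensity fun u ↦ ENNReal.ofReal (exp (2 * h1 * u)) := by
    simpa using gaussianReal_eq_withDensity_neg h1 one_ne_zero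
  have h_sq : ∀ u, exp (2 * h1 * u) ^ 2 = exp (4 * h1 * u) := fun u ↦ by
    rw [← exp_nat_mul]
    ring_nf
  refine (gaussianReal_absolutelyContinuous' (-h1) one_ne_zero).ae_le
    (κ.ae_eq_dirac_of_lintegral_eq (f := fun u ↦ exp (2 * h1 * u)) (by fun_prop)
      (fun _ ↦ (exp_pos _).le) ?_ ?_ ?_ ?_)
  · exact fun u v huv ↦ by simpa [hh1] using huv
  · simp_rw [h_sq, lintegral_exp_mul_gaussianReal]
    exact ENNReal.ofReal_ne_top
  · rw [← hP_density]
    exact lintegral_lintegral_exp_mul_eq_of_bind_Gchan_eq hh2 κ hP _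
  · simp_rw [h_sq]
    exact lintegral_lintegral_exp_mul_eq_of_bind_Gchan_eq hh2 κ hQ _
end

section
/- The joint law of the direct observation and the relay observation in the Gaussian broadcast setup, namely the measure (1/2)·(N(h3,1) ⊗ N(h1,1)) + (1/2)·(N(−h3,1) ⊗ N(−h1,1)) on ℝ × ℝ, equals the composition (compProd) of the first marginal m := (1/2)·N(h3,1) + (1/2)·N(−h3,1) with the Markov kernel x ↦ μ_x, where μ_x := w(x) • N(h1,1) + (1−w(x)) • N(−h1,1). That is, the Bayes mixture μ_x is a disintegration (regular conditional distribution) of the relay observation given the direct observation. -/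
/-!
Write both Gaussians `N(±h3,1)` as densities `p±` against Lebesgue measure. The weight `w` is
the posterior density `p₊ / (p₊ + p₋)`, so reweighting the mixture `m` by `w` gives
`(1/2) N(h3,1)`, and reweighting by `1 - w`, which is `w` with `h3` replaced by `-h3`, gives
`(1/2) N(-h3,1)`. Since `μ_x` combines two fixed measures with weights `w x` and `1 - w x`,
the composition `m ⊗ μ` splits as `(w m) × N(h1,1) + ((1 - w) m) × N(-h1,1)`.
-/

open MeasureTheory ProbabilityTheory
open scoped ENNReal

namespace MeasureTheory.Measure

variable {α β : Type*} {mα : MeasurableSpace α} {mβ : MeasurableSpace β}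

lemma compProd_eq_withDensity_prod_add {μ : Measure α} [SFinite μ] {ν ν' : Measure β}
    [SFinite ν] [SFinite ν'] {κ : Kernel α β} [IsSFiniteKernel κ] {f g : α → ℝ≥0∞}
    (hf : Measurable f) (hg : Measurable g) (hκ : ∀ a, κ a = f a • ν + g a • ν') :
    μ ⊗ₘ κ = (μ.withDensity f).prod ν + (μ.withDensity g).prod ν' := by
  ext s hs
  rw [compProd_apply hs, add_apply, prod_apply hs, prod_apply hs,
    lintegral_withDensity_eq_lintegral_mul _ hf (measurable_measure_prodMk_left hs),
    lintegral_withDensity_eq_lintegral_mul _ hg (measurable_measure_prodMk_left hs),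
    ← lintegral_add_left (hf.mul (measurable_measure_prodMk_left hs))]
  simp [hκ]

lemma withDensity_add_withDensity_withDensity_of_mul_eq {ρ : Measure α}
    {p q w : α → ℝ≥0∞} (hp : Measurable p) (hq : Measurable q) (hw : Measurable w)
    (h : ∀ x, (p x + q x) * w x = p x) :
    (ρ.withDensity p + ρ.withDensity q).withDensity w = ρ.withDensity p := by
  rw [← withDensity_add_left hp, ← withDensity_mul _ (hp.add hq) hw]
  congr with x
  exact h x

end MeasureTheory.Measure

lemma measurable_mixWeight (h3 : ℝ) : Measurable (mixWeight h3) := by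
  unfold mixWeight
  fun_prop

lemma one_sub_mixWeight (h3 x : ℝ) : 1 - mixWeight h3 x = mixWeight (-h3) x := by
  have hpos : 0 < Real.exp (-(x - h3) ^ 2 / 2) + Real.exp (-(x + h3) ^ 2 / 2) := by positivity
  simp only [mixWeight, sub_neg_eq_add, ← sub_eq_add_neg]
  rw [one_sub_div hpos.ne', add_sub_cancel_left, add_comm (Real.exp (-(x + h3) ^ 2 / 2))]

lemma gaussianPDFReal_add_mul_mixWeight (h3 x : ℝ) :
    (gaussianPDFReal h3 1 x + gaussianPDFReal (-h3) 1 x) * mixWeight h3 x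
      = gaussianPDFReal h3 1 x := by
  have hpos : 0 < Real.exp (-(x - h3) ^ 2 / 2) + Real.exp (-(x + h3) ^ 2 / 2) := by positivity
  simp only [gaussianPDFReal, mixWeight, NNReal.coe_one, mul_one, sub_neg_eq_add]
  field_simp

lemma gaussianPDF_add_mul_mixWeight (h3 x : ℝ) :
    (gaussianPDF h3 1 x + gaussianPDF (-h3) 1 x) * ENNReal.ofReal (mixWeight h3 x)
      = gaussianPDF h3 1 x := by
  have hp := gaussianPDFReal_nonneg h3 1 x
  have hq := gaussianPDFReal_nonneg (-h3) 1 x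
  simp only [gaussianPDF]
  rw [← ENNReal.ofReal_add hp hq, ← ENNReal.ofReal_mul (add_nonneg hp hq),
    gaussianPDFReal_add_mul_mixWeight]

lemma withDensity_mixWeight (h3 : ℝ) (c : ℝ≥0∞) :
    (c • gaussianReal h3 1 + c • gaussianReal (-h3) 1).withDensity
        (fun x ↦ ENNReal.ofReal (mixWeight h3 x))
      = c • gaussianReal h3 1 := by
  rw [← smul_add, withDensity_smul_measure, gaussianReal_of_var_ne_zero _ one_ne_zero,
    gaussianReal_of_var_ne_zero _ one_ne_zero,
    Measure.withDensity_add_withDensity_withDensity_of_mul_eq (measurable_gaussianPDF _ _)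
      (measurable_gaussianPDF _ _) (measurable_mixWeight h3).ennreal_ofReal
      (gaussianPDF_add_mul_mixWeight h3)]

/-- **The Bayes mixture `μ_x` disintegrates the joint observation law.**
The joint law `(1/2)(N(h3,1) ⊗ N(h1,1)) + (1/2)(N(-h3,1) ⊗ N(-h1,1))` of the direct
and relay observations equals the composition of the first marginal
`m = (1/2)N(h3,1) + (1/2)N(-h3,1)` with the Markov kernel `x ↦ μ_x`. -/
theorem bayes_mixture_is_disintegration (h1 h3 : ℝ)
    (κ : Kernel ℝ ℝ) [IsMarkovKernel κ] (hκ : ∀ x : ℝ, κ x = muX h1 h3 x) :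
    ((1 / 2 : ℝ≥0∞) • ((gaussianReal h3 1).prod (gaussianReal h1 1))
        + (1 / 2 : ℝ≥0∞) • ((gaussianReal (-h3) 1).prod (gaussianReal (-h1) 1)))
      = ((1 / 2 : ℝ≥0∞) • gaussianReal h3 1
          + (1 / 2 : ℝ≥0∞) • gaussianReal (-h3) 1).compProd κ := by
  have hκ' : ∀ x, κ x = ENNReal.ofReal (mixWeight h3 x) • gaussianReal h1 1
      + ENNReal.ofReal (mixWeight (-h3) x) • gaussianReal (-h1) 1 := fun x ↦ by
    rw [hκ, muX, one_sub_mixWeight]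
  have hneg := withDensity_mixWeight (-h3) (1 / 2)
  rw [neg_neg, add_comm] at hneg
  rw [Measure.compProd_eq_withDensity_prod_add (measurable_mixWeight h3).ennreal_ofReal
      (measurable_mixWeight (-h3)).ennreal_ofReal hκ', withDensity_mixWeight, hneg,
    Measure.prod_smul_left, Measure.prod_smul_left]
end
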